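/- arXiv:1104.4353 — 6 statements merged into one kernel-verified Lean document; each statement's English description precedes it below -/
import Mathlib

section
/- Fix a real constant C4 > 0 and set k_n = ⌈C4·ln n⌉. For every sequence (q_n) of reals with 0 ≤ q_n ≤ 1 for all n, if q_n·n/ln n → ∞ as n → ∞, then n · b(n, q_n, k_n) → 0 as n → ∞. -/
open Filter

/-- The binomial probability `b(n, p, j) = C(n, j) p^j (1-p)^(n-j)`. -/
noncomputable def binomProb (n : ℕ) (p : ℝ) (j : ℕ) : ℝ :=
  (n.choose j : ℝ) * p ^ j * (1 - p) ^ (n - j)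

/-!
With mean `m = p n`, the bounds `C(n,k) p^k ≤ m^k / k! ≤ 2^k e^{m/2}` and
`(1-p)^{n-k} ≤ e^{-p(n-k)} ≤ e^{k-m}` give `b(n, p, k) ≤ e^{2k - m/2}`.
For `k = ⌈C4 ln n⌉` the exponent `ln n + 2k - m/2` is at most
`ln n · (1 + 2|C4| - m / (2 ln n)) + 2`, which tends to `-∞` because `m / ln n → ∞`.
-/

lemma binomProb_nonneg (n : ℕ) {p : ℝ} (hp₀ : 0 ≤ p) (hp₁ : p ≤ 1) (k : ℕ) :
    0 ≤ binomProb n p k := by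
  have : 0 ≤ 1 - p := by linarith
  unfold binomProb
  positivity

lemma choose_mul_pow_le_exp (n k : ℕ) {p : ℝ} (hp : 0 ≤ p) :
    (n.choose k : ℝ) * p ^ k ≤ Real.exp (k + p * n / 2) := by
  have htwo : (2 : ℝ) ≤ Real.exp 1 := by linarith [Real.add_one_le_exp 1]
  calc (n.choose k : ℝ) * p ^ k
      ≤ (n : ℝ) ^ k / k.factorial * p ^ k := by
        gcongr; exact_mod_cast Nat.choose_le_pow_div k n
    _ = 2 ^ k * ((p * n / 2) ^ k / k.factorial) := by
        rw [div_pow, mul_pow]; field_simp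
    _ ≤ Real.exp 1 ^ k * Real.exp (p * n / 2) := by
        gcongr; exact Real.pow_div_factorial_le_exp _ (by positivity) k
    _ = Real.exp (k + p * n / 2) := by
        rw [← Real.exp_nat_mul, mul_one, Real.exp_add]

lemma one_sub_pow_sub_le_exp (n k : ℕ) {p : ℝ} (hp₀ : 0 ≤ p) (hp₁ : p ≤ 1) :
    (1 - p) ^ (n - k) ≤ Real.exp (k - p * n) := by
  have hn : (n : ℝ) ≤ (n - k : ℕ) + k := by exact_mod_cast le_tsub_add
  calc (1 - p) ^ (n - k)
      ≤ Real.exp (-p) ^ (n - k) :=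
        pow_le_pow_left₀ (by linarith) (Real.one_sub_le_exp_neg p) _
    _ = Real.exp (-p * (n - k : ℕ)) := by rw [← Real.exp_nat_mul, mul_comm]
    _ ≤ Real.exp (k - p * n) := by gcongr; nlinarith

lemma binomProb_le_exp (n k : ℕ) {p : ℝ} (hp₀ : 0 ≤ p) (hp₁ : p ≤ 1) :
    binomProb n p k ≤ Real.exp (2 * k - p * n / 2) := by
  calc binomProb n p k
      ≤ Real.exp (k + p * n / 2) * Real.exp (k - p * n) := by
        unfold binomProb
        gcongr
        · exact choose_mul_pow_le_exp n k hp₀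
        · exact one_sub_pow_sub_le_exp n k hp₀ hp₁
    _ = Real.exp (2 * k - p * n / 2) := by rw [← Real.exp_add]; ring_nf

lemma natCeil_mul_le_abs_mul_add_one (a : ℝ) {x : ℝ} (hx : 0 ≤ x) :
    (⌈a * x⌉₊ : ℝ) ≤ |a| * x + 1 :=
  calc (⌈a * x⌉₊ : ℝ) ≤ ⌈|a| * x⌉₊ := by gcongr; exact le_abs_self a
    _ ≤ |a| * x + 1 := (Nat.ceil_lt_add_one (by positivity)).le

theorem stmt_2_general (C4 : ℝ) (q : ℕ → ℝ)
    (hq : ∀ n : ℕ, 0 ≤ q n ∧ q n ≤ 1)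
    (hω : Tendsto (fun n : ℕ => q n * n / Real.log n) atTop atTop) :
    Tendsto (fun n : ℕ => (n : ℝ) * binomProb n (q n) ⌈C4 * Real.log n⌉₊)
      atTop (nhds 0) := by
  set c : ℝ := 1 + 2 * |C4|
  set E : ℕ → ℝ := fun n => Real.log n * (c - q n * n / Real.log n / 2) + 2
  have hlog : Tendsto (fun n : ℕ => Real.log n) atTop atTop :=
    Real.tendsto_log_atTop.comp tendsto_natCast_atTop_atTop
  have hE : Tendsto E atTop atBot :=
    tendsto_atBot_add_const_right _ _ <| hlog.atTop_mul_atBot₀ <|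
      tendsto_atBot_add_const_left _ _ <| tendsto_neg_atTop_atBot.comp (hω.atTop_div_const two_pos)
  have hbound : ∀ᶠ n : ℕ in atTop,
      (n : ℝ) * binomProb n (q n) ⌈C4 * Real.log n⌉₊ ≤ Real.exp (E n) := by
    filter_upwards [eventually_ge_atTop 2] with n hn
    have hn₀ : (0 : ℝ) < n := by positivity
    have hL : 0 < Real.log n := Real.log_pos (by exact_mod_cast hn)
    have hK := natCeil_mul_le_abs_mul_add_one C4 hL.le
    calc (n : ℝ) * binomProb n (q n) ⌈C4 * Real.log n⌉₊
        ≤ Real.exp (Real.log n) * Real.exp (2 * ⌈C4 * Real.log n⌉₊ - q n * n / 2) := by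
          rw [Real.exp_log hn₀]
          exact mul_le_mul_of_nonneg_left (binomProb_le_exp _ _ (hq n).1 (hq n).2) hn₀.le
      _ ≤ Real.exp (E n) := by
          rw [← Real.exp_add]
          gcongr
          have hm : Real.log n * (q n * n / Real.log n / 2) = q n * n / 2 := by field_simp
          simp only [E, c, mul_sub, hm]
          linarith
  exact squeeze_zero' (.of_forall fun n => mul_nonneg n.cast_nonneg
    (binomProb_nonneg n (hq n).1 (hq n).2 _)) hbound (Real.tendsto_exp_atBot.comp hE)

/-- If a bucket has probability mass `q_n = ω(ln n / n)`, then the probability that it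
contains exactly `⌈C4 ln n⌉` of the `n` sampled keys, multiplied by `n`, vanishes. -/
theorem stmt_2 (C4 : ℝ) (hC4 : 0 < C4) (q : ℕ → ℝ)
    (hq : ∀ n : ℕ, 0 ≤ q n ∧ q n ≤ 1)
    (hω : Tendsto (fun n : ℕ => q n * n / Real.log n) atTop atTop) :
    Tendsto (fun n : ℕ => (n : ℝ) * binomProb n (q n) ⌈C4 * Real.log n⌉₊)
      atTop (nhds 0) :=
  stmt_2_general C4 q hq hω
end

section
/- Fix a real constant C4 > 0 and set k_n = ⌈C4·ln n⌉. For every sequence (q_n) of reals with 0 ≤ q_n ≤ 1 for all n, if q_n·n/ln n → 0 as n → ∞, then n · b(n, q_n, k_n) → 0 as n → ∞. -/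
open Filter

lemma pow_div_fact_le_exp (x : ℝ) (hx : 0 ≤ x) (k : ℕ) :
    x ^ k / k.factorial ≤ Real.exp x := by
  calc x ^ k / k.factorial
      ≤ ∑ i ∈ Finset.range (k + 1), x ^ i / i.factorial := by
        refine Finset.single_le_sum (f := fun i => x ^ i / (i.factorial : ℝ))
          (fun i _ => by positivity) (Finset.self_mem_range_succ k)
    _ ≤ Real.exp x := Real.sum_le_exp_of_nonneg hx _

/-- If a bucket has probability mass `q_n = o(ln n / n)`, then the probability that it
contains exactly `⌈C4 ln n⌉` of the `n` sampled keys, multiplied by `n`, vanishes. -/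
theorem stmt_3 (C4 : ℝ) (hC4 : 0 < C4) (q : ℕ → ℝ)
    (hq : ∀ n : ℕ, 0 ≤ q n ∧ q n ≤ 1)
    (ho : Tendsto (fun n : ℕ => q n * n / Real.log n) atTop (nhds 0)) :
    Tendsto (fun n : ℕ => (n : ℝ) * binomProb n (q n) ⌈C4 * Real.log n⌉₊)
      atTop (nhds 0) := by
  set ε : ℝ := Real.exp (-(2 / C4)) with hε
  have hεpos : 0 < ε := Real.exp_pos _
  set δ : ℝ := C4 * ε / Real.exp 1 with hδ
  have hδpos : 0 < δ := by positivity
  have hev : ∀ᶠ n : ℕ in atTop, q n * n / Real.log n ≤ δ := by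
    have := (ho.eventually (eventually_le_nhds hδpos))
    simpa using this
  have hupper : ∀ᶠ n : ℕ in atTop,
      (n : ℝ) * binomProb n (q n) ⌈C4 * Real.log n⌉₊ ≤ 1 / n := by
    filter_upwards [hev, eventually_ge_atTop 2] with n hδn hn2
    have hn0 : (0:ℝ) < n := by positivity
    have hL : 0 < Real.log n := Real.log_pos (by exact_mod_cast hn2)
    set L := Real.log n with hLdef
    set k := ⌈C4 * L⌉₊ with hk
    have hkge : C4 * L ≤ (k : ℝ) := Nat.le_ceil _
    have hkpos : (0:ℝ) < k := lt_of_lt_of_le (by positivity) hkge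
    obtain ⟨hq0, hq1⟩ := hq n
    have hnq : 0 ≤ q n * n := by positivity
    -- `binomProb ≤ (n q)^k / k!`
    have h1 : binomProb n (q n) k ≤ (q n * n) ^ k / k.factorial := by
      have hsub : (1 - q n) ^ (n - k) ≤ 1 :=
        pow_le_one₀ (by linarith) (by linarith)
      have hch : (n.choose k : ℝ) ≤ (n : ℝ) ^ k / k.factorial := by
        exact_mod_cast Nat.choose_le_pow_div k n
      have hb1 : binomProb n (q n) k ≤ (n.choose k : ℝ) * q n ^ k := by
        unfold binomProb
        have : (n.choose k : ℝ) * q n ^ k * (1 - q n) ^ (n - k)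
            ≤ (n.choose k : ℝ) * q n ^ k * 1 := by
          apply mul_le_mul_of_nonneg_left hsub (by positivity)
        simpa using this
      calc binomProb n (q n) k ≤ (n.choose k : ℝ) * q n ^ k := hb1
        _ ≤ ((n : ℝ) ^ k / k.factorial) * q n ^ k :=
            mul_le_mul_of_nonneg_right hch (by positivity)
        _ = (q n * n) ^ k / k.factorial := by
            rw [mul_pow]; ring
    -- `k! ≥ (k/e)^k`, so `(nq)^k / k! ≤ (e·nq/k)^k`
    have hfact : (k : ℝ) ^ k / Real.exp 1 ^ k ≤ k.factorial := by
      have h := pow_div_fact_le_exp (k : ℝ) (le_of_lt hkpos) k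
      have hexp : Real.exp 1 ^ k = Real.exp k := by
        rw [← Real.exp_nat_mul, mul_one]
      rw [hexp, div_le_iff₀ (Real.exp_pos _)]
      rw [div_le_iff₀ (by positivity : (0:ℝ) < k.factorial)] at h
      exact h.trans_eq (mul_comm _ _)
    have h2 : (q n * n) ^ k / k.factorial ≤ (Real.exp 1 * (q n * n) / k) ^ k := by
      have hrhs : (Real.exp 1 * (q n * n) / k) ^ k
          = (q n * n) ^ k / ((k:ℝ) ^ k / Real.exp 1 ^ k) := by
        rw [div_pow, mul_pow]
        field_simp
      rw [hrhs]
      apply div_le_div_of_nonneg_left (by positivity) (by positivity) hfact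
    -- the ratio is at most ε
    have hratio : Real.exp 1 * (q n * n) / k ≤ ε := by
      have h3 : q n * n ≤ δ * L := by
        rw [div_le_iff₀ hL] at hδn; linarith
      have h4 : Real.exp 1 * (q n * n) ≤ ε * (C4 * L) := by
        have := mul_le_mul_of_nonneg_left h3 (le_of_lt (Real.exp_pos 1))
        calc Real.exp 1 * (q n * n) ≤ Real.exp 1 * (δ * L) := this
          _ = ε * (C4 * L) := by rw [hδ]; field_simp
      rw [div_le_iff₀ hkpos]
      calc Real.exp 1 * (q n * n) ≤ ε * (C4 * L) := h4
        _ ≤ ε * k := mul_le_mul_of_nonneg_left hkge (le_of_lt hεpos)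
    have h5 : (Real.exp 1 * (q n * n) / k) ^ k ≤ ε ^ k :=
      pow_le_pow_left₀ (by positivity) hratio k
    -- `ε^k ≤ n^{-2}`
    have h6 : ε ^ k ≤ (n : ℝ)⁻¹ ^ 2 := by
      have : ε ^ k = Real.exp (-(2 / C4) * k) := by
        rw [hε, ← Real.exp_nat_mul]; ring_nf
      rw [this]
      have harg : -(2 / C4) * k ≤ -(2 * L) := by
        have h7 : 2 / C4 * (C4 * L) ≤ 2 / C4 * k :=
          mul_le_mul_of_nonneg_left hkge (by positivity)
        have h8 : 2 / C4 * (C4 * L) = 2 * L := by field_simp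
        nlinarith
      calc Real.exp (-(2 / C4) * k) ≤ Real.exp (-(2 * L)) := Real.exp_le_exp.2 harg
        _ = (n : ℝ)⁻¹ ^ 2 := by
          rw [show -(2 * L) = ((2:ℕ) : ℝ) * (-L) by push_cast; ring,
            Real.exp_nat_mul, Real.exp_neg, hLdef, Real.exp_log hn0]
    calc (n : ℝ) * binomProb n (q n) k
        ≤ (n : ℝ) * ((n:ℝ)⁻¹ ^ 2) := by
          apply mul_le_mul_of_nonneg_left _ (le_of_lt hn0)
          exact le_trans h1 (le_trans h2 (le_trans h5 h6))
      _ = 1 / n := by field_simp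
  have hlower : ∀ᶠ n : ℕ in atTop,
      (0:ℝ) ≤ (n : ℝ) * binomProb n (q n) ⌈C4 * Real.log n⌉₊ := by
    filter_upwards with n
    obtain ⟨hq0, hq1⟩ := hq n
    unfold binomProb
    exact mul_nonneg (Nat.cast_nonneg n) (mul_nonneg (mul_nonneg (Nat.cast_nonneg _)
      (pow_nonneg hq0 _)) (pow_nonneg (by linarith) _))
  exact squeeze_zero' hlower hupper tendsto_one_div_atTop_nhds_zero_nat
end

section
/- For all real constants C4 > 0 and c_max ≥ 1 there exists a real constant C* > C4 such that the following holds: for every sequence (p_n) of reals with 0 ≤ p_n ≤ C4·(ln n)/n for all n ≥ 2, setting m_n = ⌈c_max·n⌉, the sequence n · ∑_{j=⌈C*·ln n⌉}^{m_n} b(m_n, p_n, j) tends to 0 as n → ∞. -/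
open Filter
open Nat

lemma pow_self_le_factorial_mul_exp (k : ℕ) :
    (k : ℝ) ^ k ≤ (k ! : ℝ) * Real.exp 1 ^ k := by
  induction k with
  | zero => simp
  | succ k ih =>
    have hstep : ((k : ℝ) + 1) ^ k ≤ Real.exp 1 * (k : ℝ) ^ k := by
      rcases Nat.eq_zero_or_pos k with rfl | hk
      · simpa using Real.one_le_exp zero_le_one
      · have hk0 : (0 : ℝ) < k := by exact_mod_cast hk
        have h1 : (1 + 1 / (k : ℝ)) ≤ Real.exp (1 / k) := by
          have := Real.add_one_le_exp (1 / (k : ℝ)); linarith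
        have h2 : ((k : ℝ) + 1) ^ k = (k : ℝ) ^ k * (1 + 1 / (k : ℝ)) ^ k := by
          rw [← mul_pow]; field_simp
        have h3 : (1 + 1 / (k : ℝ)) ^ k ≤ Real.exp (1 / k) ^ k := by
          apply pow_le_pow_left₀ (by positivity) h1
        have h4 : Real.exp (1 / (k : ℝ)) ^ k = Real.exp 1 := by
          rw [← Real.exp_nat_mul]
          congr 1
          field_simp
        rw [h2]
        calc ((k : ℝ) ^ k * (1 + 1 / (k : ℝ)) ^ k)
            ≤ (k : ℝ) ^ k * Real.exp 1 := by
              rw [← h4]; exact mul_le_mul_of_nonneg_left h3 (by positivity)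
          _ = Real.exp 1 * (k : ℝ) ^ k := mul_comm _ _
    have : ((k : ℝ) + 1) ^ (k + 1) = ((k : ℝ) + 1) * ((k : ℝ) + 1) ^ k := by ring
    push_cast
    rw [this]
    calc ((k : ℝ) + 1) * ((k : ℝ) + 1) ^ k
        ≤ ((k : ℝ) + 1) * (Real.exp 1 * (k : ℝ) ^ k) := by
          exact mul_le_mul_of_nonneg_left hstep (by positivity)
      _ ≤ ((k : ℝ) + 1) * (Real.exp 1 * ((k ! : ℝ) * Real.exp 1 ^ k)) := by
          gcongr
      _ = ((k ! : ℝ) * ((k : ℝ) + 1)) * Real.exp 1 ^ (k + 1) := by ring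
      _ = ((k + 1)! : ℝ) * Real.exp 1 ^ (k + 1) := by
          rw [Nat.factorial_succ]; push_cast; ring

set_option maxHeartbeats 1000000

/-- For all `C4 > 0` and `c_max ≥ 1` there is `C* > C4` such that for any sequence
`p_n ∈ [0, C4 (ln n)/n]`, with `m_n = ⌈c_max n⌉`,
`n · P[Binomial(m_n, p_n) ≥ ⌈C* ln n⌉] → 0`. -/
theorem stmt_4 (C4 cmax : ℝ) (hC4 : 0 < C4) (hcmax : 1 ≤ cmax) :
    ∃ Cstar : ℝ, C4 < Cstar ∧
      ∀ p : ℕ → ℝ, (∀ n : ℕ, 2 ≤ n → 0 ≤ p n ∧ p n ≤ C4 * Real.log n / n) →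
        Tendsto (fun n : ℕ =>
            (n : ℝ) *
              ∑ j ∈ Finset.Icc ⌈Cstar * Real.log n⌉₊ ⌈cmax * n⌉₊,
                binomProb ⌈cmax * n⌉₊ (p n) j)
          atTop (nhds 0) := by
  classical
  set E : ℝ := Real.exp 1 with hE
  have hE1 : 2 ≤ E := by
    have := Real.exp_one_gt_d9; rw [hE]; linarith
  have hE0 : 0 < E := by linarith
  set A : ℝ := C4 * (cmax + 1) with hA
  have hA0 : 0 < A := by positivity
  refine ⟨C4 + 2 + E ^ 2 * A, by nlinarith, ?_⟩
  set Cstar : ℝ := C4 + 2 + E ^ 2 * A with hCs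
  have hCs2 : 2 ≤ Cstar := by nlinarith
  have hCsA : E ^ 2 * A ≤ Cstar := by nlinarith
  clear_value E A Cstar
  clear hCs
  intro p hp
  -- the squeeze
  have hg : Tendsto (fun n : ℕ => 2 * (n : ℝ) ^ (-(Cstar - 1))) atTop (nhds 0) := by
    have h1 : Tendsto (fun x : ℝ => x ^ (-(Cstar - 1))) atTop (nhds 0) :=
      tendsto_rpow_neg_atTop (by linarith)
    have h2 := (h1.comp tendsto_natCast_atTop_atTop (α := ℕ)).const_mul (2 : ℝ)
    simpa using h2
  have hsmall : Tendsto (fun n : ℕ => C4 * Real.log n / n) atTop (nhds 0) := by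
    have h1 : Tendsto (fun x : ℝ => Real.log x / (1 * x + 0)) atTop (nhds 0) := by
      simpa using Real.tendsto_pow_log_div_mul_add_atTop 1 0 1 one_ne_zero
    have h2 := (h1.comp tendsto_natCast_atTop_atTop (α := ℕ)).const_mul C4
    simp only [one_mul, add_zero, mul_zero] at h2
    refine h2.congr fun n => ?_
    simp [Function.comp]; ring
  have hev1 : ∀ᶠ n : ℕ in atTop, C4 * Real.log n / n ≤ 1 :=
    hsmall.eventually (eventually_le_nhds one_pos)
  -- main estimate
  have key : ∀ᶠ n : ℕ in atTop,
      0 ≤ (n : ℝ) * ∑ j ∈ Finset.Icc ⌈Cstar * Real.log n⌉₊ ⌈cmax * n⌉₊,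
            binomProb ⌈cmax * n⌉₊ (p n) j ∧
      (n : ℝ) * ∑ j ∈ Finset.Icc ⌈Cstar * Real.log n⌉₊ ⌈cmax * n⌉₊,
            binomProb ⌈cmax * n⌉₊ (p n) j ≤ 2 * (n : ℝ) ^ (-(Cstar - 1)) := by
    filter_upwards [hev1, eventually_ge_atTop 2] with n hp1 hn2
    obtain ⟨hq0, hq⟩ := hp n hn2
    set q : ℝ := p n with hqdef
    set m : ℕ := ⌈cmax * n⌉₊ with hm
    set k : ℕ := ⌈Cstar * Real.log n⌉₊ with hk
    have hn0 : (0 : ℝ) < n := by positivity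
    have hn1R : (1 : ℝ) ≤ n := by exact_mod_cast Nat.one_le_of_lt hn2
    have hlog : 0 < Real.log n := Real.log_pos (by exact_mod_cast hn2)
    have hq1 : q ≤ 1 := hq.trans hp1
    have hmR : (m : ℝ) ≤ cmax * n + 1 := (Nat.ceil_lt_add_one (by positivity)).le
    have hmq : (m : ℝ) * q ≤ A * Real.log n := by
      calc (m : ℝ) * q ≤ (cmax * n + 1) * (C4 * Real.log n / n) := by
            apply mul_le_mul hmR hq hq0 (by positivity)
        _ = C4 * Real.log n * ((cmax * n + 1) / n) := by ring
        _ ≤ C4 * Real.log n * (cmax + 1) := by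
            apply mul_le_mul_of_nonneg_left _ (by positivity)
            rw [div_le_iff₀ hn0]; nlinarith
        _ = A * Real.log n := by rw [hA]; ring
    have hkR : Cstar * Real.log n ≤ (k : ℝ) := Nat.le_ceil _
    clear_value q m k
    clear hqdef hm hk
    -- per-term bound
    have hterm : ∀ j ∈ Finset.Icc k m, binomProb m q j ≤ E⁻¹ ^ j := by
      intro j hj
      rw [Finset.mem_Icc] at hj
      have hjR : E ^ 2 * ((m : ℝ) * q) ≤ (j : ℝ) := by
        have h1 : E ^ 2 * ((m : ℝ) * q) ≤ E ^ 2 * (A * Real.log n) :=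
          mul_le_mul_of_nonneg_left hmq (by positivity)
        have h2 : E ^ 2 * (A * Real.log n) ≤ Cstar * Real.log n := by
          have := mul_le_mul_of_nonneg_right hCsA hlog.le
          nlinarith
        have h3 : (k : ℝ) ≤ (j : ℝ) := by exact_mod_cast hj.1
        linarith
      have hb1 : binomProb m q j ≤ (m.choose j : ℝ) * q ^ j := by
        rw [binomProb]
        have h1 : (1 - q) ^ (m - j) ≤ 1 :=
          pow_le_one₀ (by linarith) (by linarith)
        have h2 : (0 : ℝ) ≤ (m.choose j : ℝ) * q ^ j := by positivity
        calc (m.choose j : ℝ) * q ^ j * (1 - q) ^ (m - j)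
            ≤ (m.choose j : ℝ) * q ^ j * 1 := by
              apply mul_le_mul_of_nonneg_left h1 h2
          _ = (m.choose j : ℝ) * q ^ j := mul_one _
      have hb2 : (m.choose j : ℝ) * q ^ j ≤ ((m : ℝ) * q) ^ j / (j ! : ℝ) := by
        have h1 : (m.choose j : ℝ) ≤ (m : ℝ) ^ j / (j ! : ℝ) := by
          have := Nat.choose_le_pow_div j m (α := ℝ)
          simpa using this
        calc (m.choose j : ℝ) * q ^ j ≤ ((m : ℝ) ^ j / (j ! : ℝ)) * q ^ j := by
              apply mul_le_mul_of_nonneg_right h1 (by positivity)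
          _ = ((m : ℝ) * q) ^ j / (j ! : ℝ) := by rw [mul_pow]; ring
      have hb3 : ((m : ℝ) * q) ^ j / (j ! : ℝ) ≤ E⁻¹ ^ j := by
        have hfac : (0 : ℝ) < (j ! : ℝ) := by exact_mod_cast j.factorial_pos
        rw [div_le_iff₀ hfac]
        have hmq0 : (0 : ℝ) ≤ (m : ℝ) * q := by positivity
        have h1 : ((m : ℝ) * q) ^ j ≤ ((j : ℝ) / E ^ 2) ^ j := by
          apply pow_le_pow_left₀ hmq0
          rw [le_div_iff₀ (by positivity)]; nlinarith [hjR]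
        have h2 : ((j : ℝ) / E ^ 2) ^ j ≤ E⁻¹ ^ j * (j ! : ℝ) := by
          have hjj := pow_self_le_factorial_mul_exp j
          rw [← hE] at hjj
          rw [div_pow]
          rw [div_le_iff₀ (by positivity)]
          have hpow : E⁻¹ ^ j * (E ^ 2) ^ j = E ^ j := by
            rw [← mul_pow]; congr 1; field_simp
          have heq : E⁻¹ ^ j * (j ! : ℝ) * (E ^ 2) ^ j = (j ! : ℝ) * E ^ j := by
            rw [mul_right_comm, hpow, mul_comm]
          rw [heq]; exact hjj
        linarith
      exact hb1.trans (hb2.trans hb3)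
    -- sum bound
    have hsum : ∑ j ∈ Finset.Icc k m, binomProb m q j ≤ E⁻¹ ^ k * 2 := by
      have hr0 : (0 : ℝ) ≤ E⁻¹ := by positivity
      have hr1 : E⁻¹ < 1 := by
        rw [inv_lt_one_iff₀]; right; linarith
      have h1 : ∑ j ∈ Finset.Icc k m, binomProb m q j ≤ ∑ j ∈ Finset.Icc k m, E⁻¹ ^ j :=
        Finset.sum_le_sum hterm
      have h2 : ∑ j ∈ Finset.Icc k m, E⁻¹ ^ j = E⁻¹ ^ k * ∑ i ∈ Finset.range (m + 1 - k), E⁻¹ ^ i := by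
        rw [← Finset.Ico_add_one_right_eq_Icc, Finset.sum_Ico_eq_sum_range]
        rw [Finset.mul_sum]
        exact Finset.sum_congr rfl fun i _ => by rw [← pow_add]
      have h3 : ∑ i ∈ Finset.range (m + 1 - k), E⁻¹ ^ i ≤ (1 - E⁻¹)⁻¹ := by
        have := Summable.sum_le_tsum (Finset.range (m + 1 - k))
          (fun i _ => by positivity) (summable_geometric_of_lt_one hr0 hr1)
        rwa [tsum_geometric_of_lt_one hr0 hr1] at this
      have h4 : (1 - E⁻¹)⁻¹ ≤ 2 := by
        have hE2 : E⁻¹ ≤ 2⁻¹ := inv_anti₀ (by norm_num) hE1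
        have h5 : (2:ℝ)⁻¹ ≤ 1 - E⁻¹ := by norm_num at hE2 ⊢; linarith
        calc (1 - E⁻¹)⁻¹ ≤ ((2:ℝ)⁻¹)⁻¹ := inv_anti₀ (by norm_num) h5
          _ = 2 := by norm_num
      calc ∑ j ∈ Finset.Icc k m, binomProb m q j ≤ E⁻¹ ^ k * ∑ i ∈ Finset.range (m + 1 - k), E⁻¹ ^ i := by
            rw [← h2]; exact h1
        _ ≤ E⁻¹ ^ k * 2 := by
            apply mul_le_mul_of_nonneg_left (h3.trans h4) (by positivity)
    -- nonnegativity
    have hnonneg : 0 ≤ ∑ j ∈ Finset.Icc k m, binomProb m q j := by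
      apply Finset.sum_nonneg
      intro j _
      rw [binomProb]
      have : (0:ℝ) ≤ 1 - q := by linarith
      positivity
    constructor
    · positivity
    · have hEk : E⁻¹ ^ k ≤ (n : ℝ) ^ (-Cstar) := by
        have h1 : E⁻¹ ^ k = Real.exp (-(k : ℝ)) := by
          rw [hE, ← Real.exp_neg, ← Real.exp_nat_mul]
          congr 1; ring
        have h2 : (n : ℝ) ^ (-Cstar) = Real.exp (Real.log n * (-Cstar)) :=
          Real.rpow_def_of_pos hn0 _
        rw [h1, h2]
        apply Real.exp_le_exp.mpr
        have hc : Real.log ↑n * -Cstar = -(Cstar * Real.log ↑n) := by ring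
        rw [hc]
        exact neg_le_neg hkR
      calc (n : ℝ) * ∑ j ∈ Finset.Icc k m, binomProb m q j
          ≤ (n : ℝ) * (E⁻¹ ^ k * 2) := mul_le_mul_of_nonneg_left hsum hn0.le
        _ ≤ (n : ℝ) * ((n : ℝ) ^ (-Cstar) * 2) := by
            apply mul_le_mul_of_nonneg_left _ hn0.le
            exact mul_le_mul_of_nonneg_right hEk (by norm_num)
        _ = 2 * ((n : ℝ) ^ (1:ℝ) * (n : ℝ) ^ (-Cstar)) := by
            rw [Real.rpow_one]; ring
        _ = 2 * (n : ℝ) ^ (-(Cstar - 1)) := by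
            rw [← Real.rpow_add hn0, show (1:ℝ) + -Cstar = -(Cstar - 1) by ring]
  exact tendsto_of_tendsto_of_tendsto_of_le_of_le' tendsto_const_nhds hg
    (key.mono fun n h => h.1) (key.mono fun n h => h.2)
end

section
/- There exist real constants C4 > 0 and c' with 0 < c' < C4 such that the following holds: for every sequence (p_n) of reals in [0,1] satisfying p_n ≥ C4·(ln n)/n for all sufficiently large n, the sequence n · ∑_{j=0}^{⌊c'·ln n⌋} b(n, p_n, j) tends to 0 as n → ∞. -/
open Filter

open Real Nat in
lemma pow_div_fact_mono {x : ℝ} {j k : ℕ} (hjk : j ≤ k) (hkx : (k : ℝ) ≤ x) :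
    x ^ j / (j ! : ℝ) ≤ x ^ k / (k ! : ℝ) := by
  induction k, hjk using Nat.le_induction with
  | base => exact le_refl _
  | succ k hk ih =>
    have hx0 : (0:ℝ) ≤ x := le_trans (by positivity) hkx
    have h1 : (k:ℝ) ≤ x := le_trans (by push_cast; linarith) hkx
    refine (ih h1).trans ?_
    rw [div_le_div_iff₀ (by positivity) (by positivity)]
    push_cast [Nat.factorial_succ, pow_succ]
    have hkx' : ((k:ℝ)+1) ≤ x := by push_cast at hkx ⊢; linarith
    nlinarith [mul_nonneg (mul_nonneg (sub_nonneg.mpr hkx') (pow_nonneg hx0 k)) (show (0:ℝ) ≤ (k ! : ℝ) by positivity)]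


open Real Nat in
set_option maxHeartbeats 1000000 in
/-- There are constants `0 < c' < C4` such that for any sequence `p_n ∈ [0,1]` with
`p_n ≥ C4 (ln n)/n` eventually, `n · P[Binomial(n, p_n) ≤ ⌊c' ln n⌋] → 0`. -/
theorem stmt_5 :
    ∃ C4 c' : ℝ, 0 < c' ∧ c' < C4 ∧
      ∀ p : ℕ → ℝ, (∀ n : ℕ, 0 ≤ p n ∧ p n ≤ 1) →
        (∀ᶠ n : ℕ in atTop, C4 * Real.log n / n ≤ p n) →
        Tendsto (fun n : ℕ =>
            (n : ℝ) *
              ∑ j ∈ Finset.range (⌊c' * Real.log n⌋₊ + 1), binomProb n (p n) j)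
          atTop (nhds 0) := by
  refine ⟨20, 1, one_pos, by norm_num, ?_⟩
  intro p hp01 hpev
  have hbound : ∀ᶠ n : ℕ in atTop,
      (n:ℝ) * ∑ j ∈ Finset.range (⌊(1:ℝ) * Real.log n⌋₊ + 1), binomProb n (p n) j ≤ 1 / n := by
    filter_upwards [hpev, eventually_ge_atTop 16] with n hpn hn16
    simp only [one_mul]
    set L := Real.log n with hLdef
    set k := ⌊L⌋₊ with hkdef
    set q := p n with hqdef
    obtain ⟨hq0, hq1⟩ := hp01 n
    have hn16' : (16:ℝ) ≤ n := by exact_mod_cast hn16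
    have hn0 : (0:ℝ) < n := by linarith
    -- L ≥ 2
    have hexp2 : Real.exp 2 < 16 := by
      have h1 := Real.exp_one_lt_d9
      have h2 : Real.exp 2 = Real.exp 1 * Real.exp 1 := by
        rw [← Real.exp_add]; norm_num
      nlinarith [Real.exp_pos 1]
    have hL2 : (2:ℝ) ≤ L := (Real.le_log_iff_exp_le hn0).mpr (le_trans hexp2.le hn16')
    have hL0 : (0:ℝ) ≤ L := by linarith
    have hkL : (k:ℝ) ≤ L := Nat.floor_le hL0
    have hLk1 : L < (k:ℝ) + 1 := Nat.lt_floor_add_one L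
    have hk2 : 2 ≤ k := Nat.le_floor (by exact_mod_cast hL2)
    have hk2' : (2:ℝ) ≤ (k:ℝ) := by exact_mod_cast hk2
    have hL2k : L ≤ 2*(k:ℝ) := by linarith
    -- L ≤ n/2
    have hs4 : (4:ℝ) ≤ Real.sqrt n := by
      have h1 : Real.sqrt 16 ≤ Real.sqrt n := Real.sqrt_le_sqrt hn16'
      have h2 : Real.sqrt 16 = 4 := by
        rw [show (16:ℝ) = 4^2 by norm_num, Real.sqrt_sq (by norm_num)]
      linarith
    have hLn2 : L ≤ (n:ℝ)/2 := by
      have hlogs : Real.log (Real.sqrt n) ≤ Real.sqrt n - 1 :=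
        Real.log_le_sub_one_of_pos (by positivity)
      have hls : Real.log (Real.sqrt n) = L / 2 := by
        rw [hLdef, Real.log_sqrt hn0.le]
      have hsq : Real.sqrt n * Real.sqrt n = n := Real.mul_self_sqrt hn0.le
      nlinarith
    have hkn2 : (k:ℝ) ≤ (n:ℝ)/2 := hkL.trans hLn2
    have hkn : k ≤ n := by
      have : (k:ℝ) ≤ (n:ℝ) := by linarith
      exact_mod_cast this
    set c : ℝ := ((n - k : ℕ) : ℝ) with hcdef
    have hc : c = (n:ℝ) - k := by rw [hcdef]; push_cast [Nat.cast_sub hkn]; ring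
    have hc2 : (n:ℝ)/2 ≤ c := by rw [hc]; linarith
    have hc0 : (0:ℝ) ≤ c := by linarith
    have h1q0 : (0:ℝ) ≤ 1 - q := by linarith
    set p0 : ℝ := 20 * L / n with hp0def
    have hp0pos : 0 < p0 := by rw [hp0def]; positivity
    have hp0q : p0 ≤ q := hpn
    have hknq : (k:ℝ) ≤ (n:ℝ) * q := by
      have : 20 * L ≤ q * n := (div_le_iff₀ hn0).mp hpn
      nlinarith
    have h10L : 10 * L ≤ p0 * c := by
      have : p0 * ((n:ℝ)/2) = 10 * L := by rw [hp0def]; field_simp; ring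
      nlinarith [mul_le_mul_of_nonneg_left hc2 hp0pos.le]
    -- Step 1: per-term bound and sum bound
    have hS1 : ∑ j ∈ Finset.range (k+1), binomProb n q j ≤
        ((k:ℝ)+1) * (((n:ℝ)*q)^k / (k ! : ℝ) * (1-q)^(n-k)) := by
      calc ∑ j ∈ Finset.range (k+1), binomProb n q j
          ≤ ∑ _j ∈ Finset.range (k+1), (((n:ℝ)*q)^k / (k ! : ℝ) * (1-q)^(n-k)) := by
            apply Finset.sum_le_sum
            intro j hj
            have hjk : j ≤ k := Nat.lt_succ_iff.mp (Finset.mem_range.mp hj)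
            show (n.choose j : ℝ) * q ^ j * (1 - q) ^ (n - j) ≤ _
            calc (n.choose j : ℝ) * q ^ j * (1 - q) ^ (n - j)
                ≤ ((n:ℝ)^j / (j ! : ℝ)) * q ^ j * (1 - q) ^ (n - j) := by
                  gcongr
                  exact Nat.choose_le_pow_div j n
              _ = (((n:ℝ)*q)^j / (j ! : ℝ)) * (1 - q) ^ (n - j) := by
                  rw [mul_pow]; ring
              _ ≤ (((n:ℝ)*q)^k / (k ! : ℝ)) * (1 - q) ^ (n - k) := by
                  apply mul_le_mul (pow_div_fact_mono hjk hknq)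
                    (pow_le_pow_of_le_one h1q0 (by linarith) (Nat.sub_le_sub_left hjk n))
                    (by positivity) (by positivity)
        _ = ((k:ℝ)+1) * (((n:ℝ)*q)^k / (k ! : ℝ) * (1-q)^(n-k)) := by
            rw [Finset.sum_const, Finset.card_range, nsmul_eq_mul]; push_cast; ring
    -- Step 2: (1-q)^(n-k) ≤ exp(-(q*c))
    have hS2 : (1-q)^(n-k) ≤ Real.exp (-(q*c)) := by
      have h1 : 1 - q ≤ Real.exp (-q) := by linarith [Real.add_one_le_exp (-q)]
      calc (1-q)^(n-k) ≤ (Real.exp (-q))^(n-k) := pow_le_pow_left₀ h1q0 h1 _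
        _ = Real.exp (-(q*c)) := by
            rw [← Real.exp_nat_mul, hcdef]; ring_nf
    -- Step 3: (n q)^k exp(-(q c)) ≤ (20 L)^k exp(-(p0 c))
    have hS3 : ((n:ℝ)*q)^k * Real.exp (-(q*c)) ≤ (20*L)^k * Real.exp (-(p0*c)) := by
      have hr : (n:ℝ)*q = (20*L) * (q / p0) := by
        rw [hp0def]; field_simp
      have hrq : 1 ≤ q/p0 := (one_le_div hp0pos).mpr hp0q
      have hA : (q/p0)^k ≤ Real.exp ((k:ℝ) * (q/p0 - 1)) := by
        calc (q/p0)^k ≤ (Real.exp (q/p0 - 1))^k := by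
              apply pow_le_pow_left₀ (by linarith)
              linarith [Real.add_one_le_exp (q/p0 - 1)]
          _ = Real.exp ((k:ℝ) * (q/p0 - 1)) := (Real.exp_nat_mul _ k).symm
      have hB : (k:ℝ) * (q/p0 - 1) ≤ (q - p0) * c := by
        have hkp0c : (k:ℝ) ≤ p0 * c := by linarith [h10L, hkL, hL0]
        have hqp : 0 ≤ q - p0 := by linarith
        have e1 : (k:ℝ) * (q/p0 - 1) = (k:ℝ) * ((q - p0)/p0) := by
          field_simp
        rw [e1]
        calc (k:ℝ) * ((q - p0)/p0) ≤ (p0 * c) * ((q - p0)/p0) := by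
              apply mul_le_mul_of_nonneg_right hkp0c (by positivity)
          _ = (q - p0) * c := by field_simp
      calc ((n:ℝ)*q)^k * Real.exp (-(q*c))
          = (20*L)^k * ((q/p0)^k * Real.exp (-(q*c))) := by rw [hr, mul_pow]; ring
        _ ≤ (20*L)^k * (Real.exp ((q-p0)*c) * Real.exp (-(q*c))) := by
            apply mul_le_mul_of_nonneg_left ?_ (by positivity)
            apply mul_le_mul_of_nonneg_right (hA.trans (Real.exp_le_exp.mpr hB))
              (Real.exp_pos _).le
        _ = (20*L)^k * Real.exp (-(p0*c)) := by rw [← Real.exp_add]; ring_nf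
    -- Step 4: (20 L)^k / k! ≤ exp (5 L)
    have hS4 : (20*L)^k / (k ! : ℝ) ≤ Real.exp (5*L) := by
      have hkk : (k:ℝ)^k / (k ! : ℝ) ≤ Real.exp k := by
        calc (k:ℝ)^k/(k ! :ℝ) ≤ ∑ j ∈ Finset.range (k+1), (k:ℝ)^j/(j ! : ℝ) :=
              Finset.single_le_sum (f := fun j => (k:ℝ)^j/(j ! : ℝ))
                (fun j _ => by positivity) (Finset.self_mem_range_succ k)
          _ ≤ Real.exp k := Real.sum_le_exp_of_nonneg (Nat.cast_nonneg k) (k+1)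
      have h40 : (40:ℝ) ≤ Real.exp 4 := by
        have h1 := Real.exp_one_gt_d9
        have hp := Real.exp_pos 1
        have h2 : Real.exp 4 = Real.exp 1 * Real.exp 1 * (Real.exp 1 * Real.exp 1) := by
          rw [show (4:ℝ) = 1+1+(1+1) by norm_num, Real.exp_add, Real.exp_add]
        have h3 : (7.389:ℝ) < Real.exp 1 * Real.exp 1 := by nlinarith
        nlinarith
      calc (20*L)^k / (k ! : ℝ) ≤ (40*(k:ℝ))^k / (k ! : ℝ) := by
            apply (div_le_div_iff_of_pos_right (by positivity)).mpr
            exact pow_le_pow_left₀ (by positivity) (by linarith) k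
        _ = 40^k * ((k:ℝ)^k / (k ! : ℝ)) := by rw [mul_pow]; ring
        _ ≤ 40^k * Real.exp k := by
            apply mul_le_mul_of_nonneg_left hkk (by positivity)
        _ ≤ (Real.exp 4)^k * Real.exp k := by
            apply mul_le_mul_of_nonneg_right (pow_le_pow_left₀ (by norm_num) h40 k)
              (Real.exp_pos _).le
        _ = Real.exp (5*(k:ℝ)) := by
            rw [← Real.exp_nat_mul, ← Real.exp_add]; ring_nf
        _ ≤ Real.exp (5*L) := Real.exp_le_exp.mpr (by linarith)
    -- Step 5
    have hS5 : Real.exp (-(p0*c)) ≤ Real.exp (-(10*L)) := Real.exp_le_exp.mpr (by linarith)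
    -- Assemble
    have hk1n : ((k:ℝ)+1) ≤ (n:ℝ) := by
      have := Real.log_le_sub_one_of_pos hn0
      linarith
    have hexpL : (n:ℝ) = Real.exp L := (Real.exp_log hn0).symm
    have hSfin : ∑ j ∈ Finset.range (k+1), binomProb n q j ≤
        (n:ℝ) * (Real.exp (5*L) * Real.exp (-(10*L))) := by
      have t1 : ((n:ℝ)*q)^k / (k ! : ℝ) * (1-q)^(n-k) ≤
          Real.exp (5*L) * Real.exp (-(10*L)) := by
        calc ((n:ℝ)*q)^k / (k ! : ℝ) * (1-q)^(n-k)
            ≤ ((n:ℝ)*q)^k / (k ! : ℝ) * Real.exp (-(q*c)) := by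
              apply mul_le_mul_of_nonneg_left hS2 (by positivity)
          _ = (((n:ℝ)*q)^k * Real.exp (-(q*c))) / (k ! : ℝ) := by ring
          _ ≤ ((20*L)^k * Real.exp (-(p0*c))) / (k ! : ℝ) := by
              exact (div_le_div_iff_of_pos_right (by positivity)).mpr hS3
          _ = ((20*L)^k / (k ! : ℝ)) * Real.exp (-(p0*c)) := by ring
          _ ≤ Real.exp (5*L) * Real.exp (-(10*L)) := by
              apply mul_le_mul hS4 hS5 (Real.exp_pos _).le (Real.exp_pos _).le
      calc ∑ j ∈ Finset.range (k+1), binomProb n q j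
          ≤ ((k:ℝ)+1) * (((n:ℝ)*q)^k / (k ! : ℝ) * (1-q)^(n-k)) := hS1
        _ ≤ (n:ℝ) * (Real.exp (5*L) * Real.exp (-(10*L))) := by
            apply mul_le_mul hk1n t1 (by positivity) hn0.le
    calc (n:ℝ) * ∑ j ∈ Finset.range (k+1), binomProb n q j
        ≤ (n:ℝ) * ((n:ℝ) * (Real.exp (5*L) * Real.exp (-(10*L)))) := by
          apply mul_le_mul_of_nonneg_left hSfin hn0.le
      _ = Real.exp (L + (L + (5*L + -(10*L)))) := by
          rw [Real.exp_add, Real.exp_add, Real.exp_add, ← hexpL]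
      _ ≤ Real.exp (-L) := Real.exp_le_exp.mpr (by linarith)
      _ = 1 / n := by rw [Real.exp_neg, ← hexpL, one_div]
  refine squeeze_zero' ?_ hbound tendsto_one_div_atTop_nhds_zero_nat
  filter_upwards with n
  apply mul_nonneg (Nat.cast_nonneg n)
  apply Finset.sum_nonneg
  intro j _
  obtain ⟨h0, h1⟩ := hp01 n
  exact mul_nonneg (mul_nonneg (Nat.cast_nonneg _) (pow_nonneg h0 _))
    (pow_nonneg (by linarith) _)
end

section
/- Let n and k be natural numbers and q a real with 0 < q < 1, n·q ≤ k < n, and set a = k/n. Then ∑_{j=k}^{n} (n choose j)·q^j·(1-q)^{n-j} ≤ (n - k + 1) · [ (q/a)^a · ((1-q)/(1-a))^{1-a} ]^n. -/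
/-- Upper-tail bound for the binomial distribution: for `n q ≤ k < n` and `a = k/n`,
the upper tail is at most the number of terms times the entropy bound on the largest term. -/
theorem stmt_12 (n k : ℕ) (q : ℝ) (hq0 : 0 < q) (hq1 : q < 1)
    (hmean : (n : ℝ) * q ≤ k) (hkn : k < n) :
    ∑ j ∈ Finset.Icc k n, (n.choose j : ℝ) * q ^ j * (1 - q) ^ (n - j) ≤
      ((n : ℝ) - k + 1) *
        ((q / ((k : ℝ) / n)) ^ ((k : ℝ) / n) *
            ((1 - q) / (1 - (k : ℝ) / n)) ^ (1 - (k : ℝ) / n)) ^ n := by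
  set A : ℝ := (k : ℝ) / n with hAdef
  have hn0 : 0 < (n : ℝ) := by
    exact_mod_cast Nat.pos_of_ne_zero (by omega)
  have hk0 : 0 < (k : ℝ) := lt_of_lt_of_le (by positivity) hmean
  have hA0 : 0 < A := div_pos hk0 hn0
  have hkltn : (k : ℝ) < n := by exact_mod_cast hkn
  have hA1 : A < 1 := (div_lt_one hn0).2 hkltn
  have hqA : q ≤ A := (le_div_iff₀ hn0).2 (by linarith [hmean])
  have h1A : 0 < 1 - A := by linarith
  have h1q : 0 < 1 - q := by linarith
  have hx0 : 0 ≤ q / A := by positivity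
  have hx1 : q / A ≤ 1 := (div_le_one hA0).2 hqA
  have hy0 : 0 ≤ (1 - q) / (1 - A) := by positivity
  have hy1 : (1:ℝ) ≤ (1 - q) / (1 - A) := (one_le_div h1A).2 (by linarith)
  set B : ℝ := (q / A) ^ k * ((1 - q) / (1 - A)) ^ (n - k) with hBdef
  have key : ∀ j ∈ Finset.Icc k n,
      (n.choose j : ℝ) * q ^ j * (1 - q) ^ (n - j) ≤ B := by
    intro j hj
    obtain ⟨hkj, hjn⟩ := Finset.mem_Icc.mp hj
    have hch : (n.choose j : ℝ) * A ^ j * (1 - A) ^ (n - j) ≤ 1 := by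
      have hsum : ∑ i ∈ Finset.range (n + 1),
          A ^ i * (1 - A) ^ (n - i) * (n.choose i : ℝ) = 1 := by
        have := add_pow A (1 - A) n
        simpa using this.symm
      have hmem : j ∈ Finset.range (n + 1) := Finset.mem_range.2 (by omega)
      have hle : A ^ j * (1 - A) ^ (n - j) * (n.choose j : ℝ) ≤
          ∑ i ∈ Finset.range (n + 1), A ^ i * (1 - A) ^ (n - i) * (n.choose i : ℝ) :=
        Finset.single_le_sum (f := fun i => A ^ i * (1 - A) ^ (n - i) * (n.choose i : ℝ))
          (fun i _ => by positivity) hmem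
      rw [hsum] at hle
      linarith [hle]
    have hq' : q ^ j = (q / A) ^ j * A ^ j := by
      rw [← mul_pow, div_mul_cancel₀ _ hA0.ne']
    have h1q' : (1 - q) ^ (n - j) = ((1 - q) / (1 - A)) ^ (n - j) * (1 - A) ^ (n - j) := by
      rw [← mul_pow, div_mul_cancel₀ _ h1A.ne']
    have step1 : (n.choose j : ℝ) * q ^ j * (1 - q) ^ (n - j) ≤
        (q / A) ^ j * ((1 - q) / (1 - A)) ^ (n - j) := by
      calc (n.choose j : ℝ) * q ^ j * (1 - q) ^ (n - j)
          = ((n.choose j : ℝ) * A ^ j * (1 - A) ^ (n - j)) *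
            ((q / A) ^ j * ((1 - q) / (1 - A)) ^ (n - j)) := by
            rw [hq', h1q']; ring
        _ ≤ 1 * ((q / A) ^ j * ((1 - q) / (1 - A)) ^ (n - j)) := by
            apply mul_le_mul_of_nonneg_right hch (by positivity)
        _ = (q / A) ^ j * ((1 - q) / (1 - A)) ^ (n - j) := one_mul _
    have step2 : (q / A) ^ j * ((1 - q) / (1 - A)) ^ (n - j) ≤ B := by
      have h1 : (q / A) ^ j ≤ (q / A) ^ k := pow_le_pow_of_le_one hx0 hx1 hkj
      have h2 : ((1 - q) / (1 - A)) ^ (n - j) ≤ ((1 - q) / (1 - A)) ^ (n - k) :=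
        pow_le_pow_right₀ hy1 (by omega)
      exact mul_le_mul h1 h2 (by positivity) (by positivity)
    exact step1.trans step2
  have hsumle : ∑ j ∈ Finset.Icc k n, (n.choose j : ℝ) * q ^ j * (1 - q) ^ (n - j) ≤
      ((Finset.Icc k n).card : ℝ) * B := by
    calc ∑ j ∈ Finset.Icc k n, (n.choose j : ℝ) * q ^ j * (1 - q) ^ (n - j)
        ≤ ∑ _j ∈ Finset.Icc k n, B := Finset.sum_le_sum key
      _ = ((Finset.Icc k n).card : ℝ) * B := by
          rw [Finset.sum_const, nsmul_eq_mul]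
  have hcard : ((Finset.Icc k n).card : ℝ) = (n : ℝ) - k + 1 := by
    rw [Nat.card_Icc]
    rw [Nat.cast_sub (by omega)]
    push_cast
    ring
  have hBeq : B = ((q / A) ^ A * ((1 - q) / (1 - A)) ^ (1 - A)) ^ n := by
    have hAn : A * (n : ℝ) = (k : ℝ) := by rw [hAdef]; field_simp
    have h1An : (1 - A) * (n : ℝ) = ((n - k : ℕ) : ℝ) := by
      rw [Nat.cast_sub hkn.le, hAdef]; field_simp
    rw [mul_pow]
    rw [← Real.rpow_natCast ((q / A) ^ A) n, ← Real.rpow_natCast (((1 - q) / (1 - A)) ^ (1 - A)) n]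
    rw [← Real.rpow_mul hx0, ← Real.rpow_mul hy0, hAn, h1An]
    rw [Real.rpow_natCast, Real.rpow_natCast]
  rw [← hBeq, ← hcard]
  exact hsumle
end

section
/- Let X be a finite set of integers, R ⊆ X, and y an integer. Let r ∈ R satisfy r ≤ y and r' ≤ r for every r' ∈ R with r' ≤ y (r is the predecessor of y in R). Let s ∈ R with r < s be such that no element of R lies strictly between r and s (s is the successor of r in R); then y < s, and the maximum of {x ∈ X : x ≤ y} equals the maximum of {x ∈ X : r ≤ x < s and x ≤ y}; in particular {x ∈ X : x ≤ y} is nonempty and its maximum lies in the bucket [r, s). -/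
/-- Correctness of the two-level predecessor scheme: if `r` is the predecessor of `y`
in `R ⊆ X` and `s` is the successor of `r` in `R`, then `y < s` and the predecessor of
`y` in `X` is found in the bucket `[r, s)`. -/
theorem stmt_17 (X R : Finset ℤ) (hRX : R ⊆ X) (y r s : ℤ)
    (hr : r ∈ R) (hry : r ≤ y) (hrmax : ∀ r' ∈ R, r' ≤ y → r' ≤ r)
    (hs : s ∈ R) (hrs : r < s) (hsucc : ∀ t ∈ R, ¬(r < t ∧ t < s)) :
    y < s ∧ (X.filter (fun x => x ≤ y)).Nonempty ∧
      (X.filter (fun x => x ≤ y)).max =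
        (X.filter (fun x => r ≤ x ∧ x < s ∧ x ≤ y)).max := by
  have hys : y < s := by
    by_contra h
    exact absurd (hrmax s hs (le_of_not_gt h)) (not_le.mpr hrs)
  have hrA : r ∈ X.filter (fun x => x ≤ y) := by
    simp [Finset.mem_filter, hRX hr, hry]
  have hA : (X.filter (fun x => x ≤ y)).Nonempty := ⟨r, hrA⟩
  refine ⟨hys, hA, ?_⟩
  set A := X.filter (fun x => x ≤ y) with hAdef
  set B := X.filter (fun x => r ≤ x ∧ x < s ∧ x ≤ y) with hBdef
  have hBA : B ⊆ A := by
    intro x hx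
    simp only [hBdef, hAdef, Finset.mem_filter] at hx ⊢
    exact ⟨hx.1, hx.2.2.2⟩
  set m := A.max' hA with hm
  have hmA : m ∈ A := A.max'_mem hA
  have hmX : m ∈ X := (Finset.mem_filter.mp hmA).1
  have hmy : m ≤ y := (Finset.mem_filter.mp hmA).2
  have hrm : r ≤ m := A.le_max' r hrA
  have hmB : m ∈ B := by
    simp only [hBdef, Finset.mem_filter]
    exact ⟨hmX, hrm, lt_of_le_of_lt hmy hys, hmy⟩
  have hB : B.Nonempty := ⟨m, hmB⟩
  have : A.max' hA = B.max' hB := by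
    apply le_antisymm
    · exact B.le_max' m hmB
    · exact A.le_max' _ (hBA (B.max'_mem hB))
  rw [← Finset.coe_max' hA, ← Finset.coe_max' hB, this]
end
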